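/- Let V be a finite-dimensional vector space of dimension d over a field of characteristic 0, and let λ be a partition of n with more than d parts. Then the Schur functor value S_λ(V) = Hom_{S_n}(U_λ, V^{⊗n}) is zero. -/

import Mathlib

/-!
The column antisymmetrizer `b` of the Young symmetrizer `c = a * b` acts by zero on `V^{⊗n}`.
Summing `b` over the left translates by permutations of the first column multiplies it by the
number of those permutations, nonzero in characteristic 0, and regroups it as the antisymmetrizer
of the first column times other operators; antisymmetrizing more than `dim V` tensor factors
evaluates an alternating map on a linearly dependent family, so it is zero. Hence every element of
the left ideal `U = K[S_n] c` acts by zero. By Maschke's theorem `U` is a direct summand of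
`K[S_n]`, so it has a right identity `e ∈ U`, and an equivariant `f` satisfies
`f x = f (x e) = x • f e = 0`.
-/

open TensorProduct PiTensorProduct Equiv

theorem Finset.card_nsmul_sum_eq_sum_sum_mul {G P M : Type*} [Group G] [Group P] [Fintype P]
    [AddCommMonoid M] (φ : P →* G) {C : Finset G} (hC : ∀ p, ∀ q ∈ C, φ p * q ∈ C)
    (F : G → M) : Fintype.card P • ∑ q ∈ C, F q = ∑ q ∈ C, ∑ p, F (φ p * q) := by
  rw [Finset.sum_comm, ← Finset.card_univ, ← Finset.sum_const]
  refine Finset.sum_congr rfl fun p _ => Finset.sum_nbij' (φ p⁻¹ * ·) (φ p * ·)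
    (fun q hq => hC _ q hq) (fun q hq => hC p q hq) (fun q _ => ?_) (fun q _ => ?_) (fun q _ => ?_)
  all_goals simp

theorem Submodule.exists_mul_eq_self_of_isCompl {R : Type*} [Ring R] {I J : Submodule R R}
    (h : IsCompl I J) : ∃ e ∈ I, ∀ x ∈ I, x * e = x := by
  obtain ⟨e, he, f, hf, hef⟩ :=
    Submodule.mem_sup.mp (h.sup_eq_top ▸ Submodule.mem_top (x := (1 : R)))
  refine ⟨e, he, fun x hx => ?_⟩
  have hxf : x * f = x - x * e := by rw [eq_sub_of_add_eq' hef, mul_sub, mul_one]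
  have hxf0 : x * f = 0 := Submodule.disjoint_def.mp h.disjoint _
    (hxf ▸ I.sub_mem hx (I.smul_mem x he)) (J.smul_mem x hf)
  rwa [hxf, sub_eq_zero, eq_comm] at hxf0

namespace Representation

variable {k G W : Type*} [CommSemiring k] [Monoid G] [AddCommMonoid W] [Module k W]
  (ρ : Representation k G W) {U : Submodule k (MonoidAlgebra k G)}

theorem map_mul_of_map_single_mul (hU : ∀ a, ∀ x ∈ U, a * x ∈ U) (f : U →ₗ[k] W)
    (hf : ∀ (g : G) (x : MonoidAlgebra k G) (hx : x ∈ U)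
      (hgx : MonoidAlgebra.single g 1 * x ∈ U),
      f ⟨MonoidAlgebra.single g 1 * x, hgx⟩ = ρ g (f ⟨x, hx⟩))
    (a x : MonoidAlgebra k G) (hx : x ∈ U) :
    f ⟨a * x, hU a x hx⟩ = ρ.asAlgebraHom a (f ⟨x, hx⟩) := by
  induction a using MonoidAlgebra.induction_on with
  | of g => rw [asAlgebraHom_of]; exact hf g x hx _
  | add a b ha hb =>
    rw [map_add, LinearMap.add_apply, ← ha, ← hb, ← map_add]
    exact congrArg f (Subtype.ext (add_mul a b x))
  | smul r a ha =>
    rw [map_smul, LinearMap.smul_apply, ← ha, ← map_smul]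
    exact congrArg f (Subtype.ext (smul_mul_assoc r a x))

theorem eq_zero_of_asAlgebraHom_eq_zero (hU : ∀ a, ∀ x ∈ U, a * x ∈ U) (f : U →ₗ[k] W)
    (hf : ∀ (g : G) (x : MonoidAlgebra k G) (hx : x ∈ U)
      (hgx : MonoidAlgebra.single g 1 * x ∈ U),
      f ⟨MonoidAlgebra.single g 1 * x, hgx⟩ = ρ g (f ⟨x, hx⟩))
    {e : MonoidAlgebra k G} (he : e ∈ U) (hxe : ∀ x ∈ U, x * e = x)
    (hρU : ∀ x ∈ U, ρ.asAlgebraHom x = 0) : f = 0 := by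
  ext ⟨x, hx⟩
  calc f ⟨x, hx⟩ = f ⟨x * e, hU x e he⟩ := by simp only [hxe x hx]
    _ = 0 := by rw [map_mul_of_map_single_mul ρ hU f hf x e he, hρU x hx, LinearMap.zero_apply]

end Representation

theorem YoungDiagram.colLen_le_card {ι : Type*} [Fintype ι] (μ : YoungDiagram)
    (T : {c // c ∈ μ.cells} ≃ ι) (j : ℕ) :
    μ.colLen j ≤ Fintype.card {i // (T.symm i : ℕ × ℕ).2 = j} := by
  have hmem : ∀ k : Fin (μ.colLen j), ((k : ℕ), j) ∈ μ.cells := fun k =>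
    YoungDiagram.mem_iff_lt_colLen.mpr k.2
  simpa using Fintype.card_le_of_injective
    (fun k => (⟨T ⟨_, hmem k⟩, by simp⟩ : {i // (T.symm i : ℕ × ℕ).2 = j})) fun k k' h => by
      simpa [Fin.ext_iff] using h

namespace PiTensorProduct

variable {K V ι : Type*} [Field K] [AddCommGroup V] [Module K V]

theorem sum_sign_smul_tprod_comp_ofSubtype_eq_zero [FiniteDimensional K V] [DecidableEq ι]
    (p : ι → Prop) [DecidablePred p] [Fintype (Subtype p)]
    (hp : Module.finrank K V < Fintype.card (Subtype p)) (u : ι → V) :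
    ∑ σ : Perm (Subtype p), Perm.sign σ • tprod K (u ∘ Perm.ofSubtype σ) = 0 := by
  have hdep : ¬LinearIndependent K (fun i : Subtype p => u i) := fun h =>
    hp.not_ge h.fintype_card_le_finrank
  rw [← ((tprod K : MultilinearMap K (fun _ : ι => V) _).domDomRestrict p
    fun j => u j).alternatization.map_linearDependent _ hdep,
    MultilinearMap.alternatization_apply]
  refine Finset.sum_congr rfl fun σ _ => congrArg _ (congrArg _ (funext fun i => ?_))
  by_cases hi : p i <;> simp [hi, Perm.ofSubtype_apply_of_mem, Perm.ofSubtype_apply_of_not_mem]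

variable (K V ι) in
noncomputable def permRep : Representation K (Perm ι) (⨂[K] _ : ι, V) where
  toFun σ := (reindex K (fun _ => V) σ).toLinearMap
  map_one' := by ext v; exact reindex_tprod _ v
  map_mul' σ τ := by
    ext v
    simp only [LinearMap.compMultilinearMap_apply, LinearEquiv.coe_coe, Module.End.mul_apply,
      reindex_tprod]
    rfl

theorem permRep_tprod (σ : Perm ι) (v : ι → V) :
    permRep K V ι σ (tprod K v) = tprod K (v ∘ ⇑σ⁻¹) :=
  reindex_tprod _ _

theorem sum_sign_smul_permRep_ofSubtype_eq_zero [FiniteDimensional K V] [DecidableEq ι]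
    (p : ι → Prop) [DecidablePred p] [Fintype (Subtype p)]
    (hp : Module.finrank K V < Fintype.card (Subtype p)) :
    ∑ σ : Perm (Subtype p), Perm.sign σ • permRep K V ι (Perm.ofSubtype σ) = 0 := by
  ext v
  simp only [LinearMap.compMultilinearMap_apply, LinearMap.coe_sum, Finset.sum_apply,
    LinearMap.zero_apply]
  rw [← sum_sign_smul_tprod_comp_ofSubtype_eq_zero p hp v]
  exact Fintype.sum_equiv (Equiv.inv _) _ _ fun σ => by
    simp [Units.smul_def, permRep_tprod, ← map_inv]

theorem sum_sign_smul_permRep_fiberwise_eq_zero [CharZero K] [FiniteDimensional K V] [Fintype ι]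
    [DecidableEq ι] {β : Type*} [DecidableEq β] (g : ι → β) (b : β)
    (hb : Module.finrank K V < Fintype.card {i // g i = b}) :
    ∑ q ∈ Finset.univ.filter (fun q : Perm ι => ∀ i, g (q i) = g i),
      Perm.sign q • permRep K V ι q = 0 := by
  set C := Finset.univ.filter (fun q : Perm ι => ∀ i, g (q i) = g i)
  have hC : ∀ σ : Perm {i // g i = b}, ∀ q ∈ C, Perm.ofSubtype σ * q ∈ C := by
    simp only [C, Finset.mem_filter, Finset.mem_univ, true_and, Perm.mul_apply]
    intro σ q hq i
    by_cases hqi : g (q i) = b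
    · rw [Perm.ofSubtype_apply_of_mem σ hqi, (σ ⟨q i, hqi⟩).2, ← hqi, hq]
    · rw [Perm.ofSubtype_apply_of_not_mem σ hqi, hq]
  have hcoset : ∀ q, ∑ σ : Perm {i // g i = b},
      Perm.sign (Perm.ofSubtype σ * q) • permRep K V ι (Perm.ofSubtype σ * q) = 0 := fun q => by
    simp only [map_mul, Perm.sign_ofSubtype, ← smul_mul_smul_comm, ← Finset.sum_mul,
      sum_sign_smul_permRep_ofSubtype_eq_zero _ hb, zero_mul]
  have h := Finset.card_nsmul_sum_eq_sum_sum_mul Perm.ofSubtype hC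
    fun q => Perm.sign q • permRep K V ι q
  rw [Finset.sum_eq_zero fun q _ => hcoset q, ← Nat.cast_smul_eq_nsmul K] at h
  exact (smul_eq_zero.mp h).resolve_left (Nat.cast_ne_zero.mpr Fintype.card_ne_zero)

theorem asAlgebraHom_permRep_colAntisymmetrizer_eq_zero [CharZero K] [FiniteDimensional K V]
    [Fintype ι] [DecidableEq ι] (μ : YoungDiagram) (T : {c // c ∈ μ.cells} ≃ ι)
    (hμ : Module.finrank K V < μ.colLen 0) :
    (permRep K V ι).asAlgebraHom (∑ q ∈ Finset.univ.filter (fun q : Perm ι =>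
        ∀ x : {c // c ∈ μ.cells}, (↑(T.symm (q (T x))) : ℕ × ℕ).2 = (↑x : ℕ × ℕ).2),
      MonoidAlgebra.single q ((Perm.sign q : ℤ) : K)) = 0 := by
  rw [map_sum, Finset.filter_congr
    (q := fun q : Perm ι => ∀ i, (T.symm (q i) : ℕ × ℕ).2 = (T.symm i : ℕ × ℕ).2)
    fun q _ => ⟨fun h i => by simpa using h (T.symm i), fun h x => by simpa using h (T x)⟩]
  simp only [Representation.asAlgebraHom_single]
  exact sum_sign_smul_permRep_fiberwise_eq_zero _ 0 (hμ.trans_le (μ.colLen_le_card T 0))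

end PiTensorProduct

theorem schur_functor_zero_of_many_parts_general {K V : Type} [Field K] [CharZero K]
    [AddCommGroup V] [Module K V] [FiniteDimensional K V]
    {d n : ℕ} (hd : Module.finrank K V = d)
    (μ : YoungDiagram) (hparts : d < μ.colLen 0)
    (T : {c // c ∈ μ.cells} ≃ Fin n)
    (ρ : Equiv.Perm (Fin n) → Module.End K (⨂[K] (_ : Fin n), V))
    (hρ : ∀ (σ : Equiv.Perm (Fin n)) (v : Fin n → V),
      ρ σ (tprod K v) = tprod K (v ∘ ⇑σ⁻¹))
    (c : MonoidAlgebra K (Equiv.Perm (Fin n)))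
    (hc : c =
      (∑ p ∈ Finset.univ.filter (fun p : Equiv.Perm (Fin n) =>
          ∀ x : {c // c ∈ μ.cells}, (↑(T.symm (p (T x))) : ℕ × ℕ).1 = (↑x : ℕ × ℕ).1),
        MonoidAlgebra.single p (1 : K)) *
      (∑ q ∈ Finset.univ.filter (fun q : Equiv.Perm (Fin n) =>
          ∀ x : {c // c ∈ μ.cells}, (↑(T.symm (q (T x))) : ℕ × ℕ).2 = (↑x : ℕ × ℕ).2),
        MonoidAlgebra.single q ((Equiv.Perm.sign q : ℤ) : K)))
    (U : Submodule K (MonoidAlgebra K (Equiv.Perm (Fin n))))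
    (hU : U = LinearMap.range (LinearMap.mulRight K c))
    (f : U →ₗ[K] ⨂[K] (_ : Fin n), V)
    (hf : ∀ (σ : Equiv.Perm (Fin n)) (x : MonoidAlgebra K (Equiv.Perm (Fin n)))
      (hx : x ∈ U) (hx' : MonoidAlgebra.single σ (1 : K) * x ∈ U),
      f ⟨MonoidAlgebra.single σ (1 : K) * x, hx'⟩ = ρ σ (f ⟨x, hx⟩)) :
    f = 0 := by
  subst hd hU
  obtain rfl : ρ = permRep K V (Fin n) := funext fun σ =>
    PiTensorProduct.ext <| MultilinearMap.ext fun v => by simp [hρ, permRep_tprod]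
  have hspan : ∀ x, x ∈ LinearMap.range (LinearMap.mulRight K c) ↔ x ∈ Submodule.span _ {c} :=
    fun x => Submodule.mem_span_singleton.symm
  obtain ⟨e, he, hxe⟩ := Submodule.exists_mul_eq_self_of_isCompl
    (MonoidAlgebra.Submodule.exists_isCompl (Submodule.span _ {c})).choose_spec
  refine (permRep K V (Fin n)).eq_zero_of_asAlgebraHom_eq_zero ?_ f hf ((hspan e).2 he)
    (fun x hx => hxe x ((hspan x).1 hx)) ?_
  · rintro a _ ⟨y, rfl⟩
    exact ⟨a * y, mul_assoc a y c⟩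
  · rintro _ ⟨y, rfl⟩
    rw [LinearMap.mulRight_apply, map_mul, hc, map_mul,
      asAlgebraHom_permRep_colAntisymmetrizer_eq_zero μ T hparts, mul_zero, mul_zero]

/-- Let `V` be a `d`-dimensional vector space over a field of characteristic 0
and let `λ` be a partition of `n` (presented as a Young diagram `μ` with `n` cells) with more
than `d` parts (i.e. its first column has length `> d`).  Then the Schur functor value
`S_λ(V) = Hom_{S_n}(U_λ, V^{⊗n})` is zero: every `S_n`-equivariant linear map from
`U_λ` to `V^{⊗n}` vanishes.  Here, following Theorem 4.36 of Etingof et al., `U_λ` is realized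
as the left ideal `ℚ[S_n]·c_λ` of the group algebra generated by the Young symmetrizer
`c_λ = a_λ · b_λ` of a Young tableau `T` on `μ` (`a_λ` the sum of the row stabilizer, `b_λ`
the signed sum of the column stabilizer), `S_n` acts on `U_λ` by left multiplication, and
`S_n` acts on `V^{⊗n}` by permuting the tensor factors (`ρ`). -/
theorem schur_functor_zero_of_many_parts {K V : Type} [Field K] [CharZero K]
    [AddCommGroup V] [Module K V] [FiniteDimensional K V]
    {d n : ℕ} (hd : Module.finrank K V = d)
    (μ : YoungDiagram) (hn : μ.card = n) (hparts : d < μ.colLen 0)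
    (T : {c // c ∈ μ.cells} ≃ Fin n)
    (ρ : Equiv.Perm (Fin n) → Module.End K (⨂[K] (_ : Fin n), V))
    (hρ : ∀ (σ : Equiv.Perm (Fin n)) (v : Fin n → V),
      ρ σ (tprod K v) = tprod K (v ∘ ⇑σ⁻¹))
    (c : MonoidAlgebra K (Equiv.Perm (Fin n)))
    (hc : c =
      (∑ p ∈ Finset.univ.filter (fun p : Equiv.Perm (Fin n) =>
          ∀ x : {c // c ∈ μ.cells}, (↑(T.symm (p (T x))) : ℕ × ℕ).1 = (↑x : ℕ × ℕ).1),
        MonoidAlgebra.single p (1 : K)) *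
      (∑ q ∈ Finset.univ.filter (fun q : Equiv.Perm (Fin n) =>
          ∀ x : {c // c ∈ μ.cells}, (↑(T.symm (q (T x))) : ℕ × ℕ).2 = (↑x : ℕ × ℕ).2),
        MonoidAlgebra.single q ((Equiv.Perm.sign q : ℤ) : K)))
    (U : Submodule K (MonoidAlgebra K (Equiv.Perm (Fin n))))
    (hU : U = LinearMap.range (LinearMap.mulRight K c))
    (f : U →ₗ[K] ⨂[K] (_ : Fin n), V)
    (hf : ∀ (σ : Equiv.Perm (Fin n)) (x : MonoidAlgebra K (Equiv.Perm (Fin n)))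
      (hx : x ∈ U) (hx' : MonoidAlgebra.single σ (1 : K) * x ∈ U),
      f ⟨MonoidAlgebra.single σ (1 : K) * x, hx'⟩ = ρ σ (f ⟨x, hx⟩)) :
    f = 0 :=
  schur_functor_zero_of_many_parts_general hd μ hparts T ρ hρ c hc U hU f hf
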